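/- Let φ be a modal CNF formula whose modalities are not indexed by atoms, and let G(φ) be its colored graph. Then: (a) every consistent permutation σ that is a symmetry of φ induces a colored automorphism of G(φ) that maps each literal vertex l to the literal vertex σ(l) and each clause-occurrence vertex for a clause C to a clause-occurrence vertex for σ(C) of the same color; and (b) conversely, the restriction to literal vertices of any colored automorphism of G(φ) is a consistent permutation of the literals occurring in φ which (extended by the identity on all other literals) is a symmetry of φ. -/

import Mathlib

namespace ModalSym

inductive Lit (Atom : Type) : Type
  | pos (a : Atom) : Lit Atom
  | neg (a : Atom) : Lit Atom
  deriving DecidableEq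

namespace Lit
def flip {Atom : Type} : Lit Atom → Lit Atom
  | pos a => neg a
  | neg a => pos a
def atom {Atom : Type} : Lit Atom → Atom
  | pos a => a
  | neg a => a
end Lit

/-- A permutation `σ` of literals is consistent when it commutes with negation. -/
def Consistent {Atom : Type} (σ : Lit Atom → Lit Atom) : Prop :=
  ∀ l, σ l.flip = (σ l).flip

/-- Modal CNF clauses of modal depth at most `n`: a clause is a finite set whose
elements are literals or modal literals `□ₘ C` / `¬□ₘ C` (`Bool` gives the polarity,
`true` for `□ₘ C`). -/
@[reducible] def ClauseT (Atom Mod : Type) : ℕ → Type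
  | 0 => Finset (Lit Atom)
  | n+1 => Finset (Lit Atom ⊕ Bool × Mod × ClauseT Atom Mod n)

instance instDecEqClauseT {Atom Mod : Type} [DecidableEq Atom] [DecidableEq Mod] :
    ∀ n, DecidableEq (ClauseT Atom Mod n)
  | 0 => inferInstanceAs (DecidableEq (Finset (Lit Atom)))
  | n+1 =>
    letI := instDecEqClauseT (Atom := Atom) (Mod := Mod) n
    inferInstanceAs (DecidableEq (Finset (Lit Atom ⊕ Bool × Mod × ClauseT Atom Mod n)))

/-- A modal CNF formula (of modal depth at most `n`): a finite set of clauses. -/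
@[reducible] def FormT (Atom Mod : Type) (n : ℕ) : Type := Finset (ClauseT Atom Mod n)

/-- A pointed Kripke model. -/
structure KModel (Atom Mod : Type) : Type 1 where
  W : Type
  pt : W
  V : W → Set Atom
  R : Mod → W → W → Prop

def satLit {Atom : Type} (S : Set Atom) : Lit Atom → Prop
  | .pos a => a ∈ S
  | .neg a => a ∉ S

def satClause {Atom Mod : Type} (M : KModel Atom Mod) :
    ∀ n, ClauseT Atom Mod n → M.W → Prop
  | 0, C, v => ∃ l ∈ C, satLit (M.V v) l
  | n+1, C, v => ∃ e ∈ C,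
      match e with
      | Sum.inl l => satLit (M.V v) l
      | Sum.inr (b, m, C') =>
          cond b (∀ u, M.R m v u → satClause M n C' u)
                 (¬ ∀ u, M.R m v u → satClause M n C' u)

/-- `M ⊨ φ`. -/
def satForm {Atom Mod : Type} (M : KModel Atom Mod) {n : ℕ} (φ : FormT Atom Mod n) : Prop :=
  ∀ C ∈ φ, satClause M n C M.pt

/-- `L_S`, the complete consistent set of literals generated by `S ⊆ Atom`. -/
def genLits {Atom : Type} (S : Set Atom) : Set (Lit Atom) := {l | satLit S l}

def permClause {Atom Mod : Type} [DecidableEq Atom] [DecidableEq Mod]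
    (σ : Lit Atom → Lit Atom) : ∀ n, ClauseT Atom Mod n → ClauseT Atom Mod n
  | 0, C => C.image σ
  | n+1, C => C.image fun e =>
      match e with
      | Sum.inl l => Sum.inl (σ l)
      | Sum.inr (b, m, C') => Sum.inr (b, m, permClause σ n C')

/-- The action `σ(φ)` of a permutation of literals on a modal CNF formula. -/
def permForm {Atom Mod : Type} [DecidableEq Atom] [DecidableEq Mod]
    (σ : Lit Atom → Lit Atom) {n : ℕ} (φ : FormT Atom Mod n) : FormT Atom Mod n :=
  φ.image (permClause σ n)

/-- The permuted model `σ(M)`, with `V'(v) = σ(L_{V(v)}) ∩ Atom`. -/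
def permModel {Atom Mod : Type} (σ : Lit Atom → Lit Atom) (M : KModel Atom Mod) :
    KModel Atom Mod where
  W := M.W
  pt := M.pt
  V := fun v => {a | Lit.pos a ∈ σ '' genLits (M.V v)}
  R := M.R

def IsBisim {Atom Mod : Type} (M M' : KModel Atom Mod) (Z : M.W → M'.W → Prop) : Prop :=
  Z M.pt M'.pt ∧
  (∀ v v', Z v v' → ∀ a, a ∈ M.V v ↔ a ∈ M'.V v') ∧
  (∀ v v' m u, Z v v' → M.R m v u → ∃ u', M'.R m v' u' ∧ Z u u') ∧
  (∀ v v' m u', Z v v' → M'.R m v' u' → ∃ u, M.R m v u ∧ Z u u')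

def Bisimilar {Atom Mod : Type} (M M' : KModel Atom Mod) : Prop := ∃ Z, IsBisim M M' Z

def IsSigmaSim {Atom Mod : Type} (σ : Lit Atom → Lit Atom) (M M' : KModel Atom Mod)
    (Z : M.W → M'.W → Prop) : Prop :=
  Z M.pt M'.pt ∧
  (∀ v v', Z v v' → ∀ l, l ∈ genLits (M.V v) ↔ σ l ∈ genLits (M'.V v')) ∧
  (∀ v v' m u, Z v v' → M.R m v u → ∃ u', M'.R m v' u' ∧ Z u u') ∧
  (∀ v v' m u', Z v v' → M'.R m v' u' → ∃ u, M.R m v u ∧ Z u u')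

/-- `M ,→σ M'`. -/
def SigmaSim {Atom Mod : Type} (σ : Lit Atom → Lit Atom) (M M' : KModel Atom Mod) : Prop :=
  ∃ Z, IsSigmaSim σ M M' Z

/-- `IsPathFrom M v p`: `p` is a valid path (list of (modality, state) steps) starting at `v`. -/
def IsPathFrom {Atom Mod : Type} (M : KModel Atom Mod) : M.W → List (Mod × M.W) → Prop
  | _, [] => True
  | v, s :: rest => M.R s.1 v s.2 ∧ IsPathFrom M s.2 rest

def pathLast {Atom Mod : Type} (M : KModel Atom Mod) : M.W → List (Mod × M.W) → M.W
  | v, [] => v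
  | _, s :: rest => pathLast M s.2 rest

/-- A tree model: every state is the last state of exactly one rooted path. -/
def IsTree {Atom Mod : Type} (M : KModel Atom Mod) : Prop :=
  ∀ v : M.W, ∃! p : List (Mod × M.W), IsPathFrom M M.pt p ∧ pathLast M M.pt p = v

/-- The depth of a state: the (minimal) length of a rooted path leading to it. -/
noncomputable def depth {Atom Mod : Type} (M : KModel Atom Mod) (v : M.W) : ℕ :=
  sInf {d | ∃ p, IsPathFrom M M.pt p ∧ pathLast M M.pt p = v ∧ p.length = d}

/-- The unravelling `T(M)`. -/
def unravel {Atom Mod : Type} (M : KModel Atom Mod) : KModel Atom Mod where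
  W := {p : List (Mod × M.W) // IsPathFrom M M.pt p}
  pt := ⟨[], trivial⟩
  V := fun p => M.V (pathLast M M.pt p.1)
  R := fun m p p' => ∃ v, p'.1 = p.1 ++ [(m, v)]

/-- `head(σ̄)`: the first permutation of the sequence, identity for the empty sequence. -/
def headP {Atom : Type} (σs : List (Lit Atom → Lit Atom)) : Lit Atom → Lit Atom :=
  σs.headD id

def lpermClause {Atom Mod : Type} [DecidableEq Atom] [DecidableEq Mod]
    (σs : List (Lit Atom → Lit Atom)) : ∀ n, ClauseT Atom Mod n → ClauseT Atom Mod n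
  | 0, C => C.image (headP σs)
  | n+1, C => C.image fun e =>
      match e with
      | Sum.inl l => Sum.inl (headP σs l)
      | Sum.inr (b, m, C') => Sum.inr (b, m, lpermClause σs.tail n C')

/-- The action `σ̄(φ)` of a permutation sequence on a modal CNF formula. -/
def lpermForm {Atom Mod : Type} [DecidableEq Atom] [DecidableEq Mod]
    (σs : List (Lit Atom → Lit Atom)) {n : ℕ} (φ : FormT Atom Mod n) : FormT Atom Mod n :=
  φ.image (lpermClause σs n)

/-- The layered permuted model `σ̄(M)` (meaningful on tree models):
at a state of depth `d` the permutation `head(σ̄_{d+1})` is used. -/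
noncomputable def lpermModel {Atom Mod : Type} (σs : List (Lit Atom → Lit Atom))
    (M : KModel Atom Mod) : KModel Atom Mod where
  W := M.W
  pt := M.pt
  V := fun v => {a | Lit.pos a ∈ headP (σs.drop (depth M v)) '' genLits (M.V v)}
  R := M.R

def IsLSim {Atom Mod : Type} (σs : List (Lit Atom → Lit Atom)) (M M' : KModel Atom Mod)
    (Z : ℕ → M.W → M'.W → Prop) : Prop :=
  Z 0 M.pt M'.pt ∧
  (∀ i v v', Z i v v' →
    ∀ l, l ∈ genLits (M.V v) ↔ headP (σs.drop i) l ∈ genLits (M'.V v')) ∧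
  (∀ i v v' m u, Z i v v' → M.R m v u → ∃ u', M'.R m v' u' ∧ Z (i+1) u u') ∧
  (∀ i v v' m u', Z i v v' → M'.R m v' u' → ∃ u, M.R m v u ∧ Z (i+1) u u')

/-- `M ,→σ̄ M'`. -/
def LSim {Atom Mod : Type} (σs : List (Lit Atom → Lit Atom)) (M M' : KModel Atom Mod) : Prop :=
  ∃ Z, IsLSim σs M M' Z

/-- `Mod_C(φ)`: the models in the class `𝒞` satisfying `φ`. -/
def ModC {Atom Mod : Type} (𝒞 : Set (KModel Atom Mod)) {n : ℕ} (φ : FormT Atom Mod n) :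
    Set (KModel Atom Mod) := {M ∈ 𝒞 | satForm M φ}

/-- `φ ⊨_C ψ`. -/
def Entails {Atom Mod : Type} (𝒞 : Set (KModel Atom Mod)) {n₁ n₂ : ℕ}
    (φ : FormT Atom Mod n₁) (ψ : FormT Atom Mod n₂) : Prop :=
  ModC 𝒞 φ ⊆ ModC 𝒞 ψ


/-! Colored graph `G(φ)` associated with a modal CNF formula `φ`
(the modalities are not indexed by atoms, so there are no `E₂` edges). -/

/-- A clause packaged with its depth bound. -/
abbrev SClause (Atom Mod : Type) := Σ k : ℕ, ClauseT Atom Mod k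

def permSClause {Atom Mod : Type} [DecidableEq Atom] [DecidableEq Mod]
    (σ : Lit Atom → Lit Atom) (C : SClause Atom Mod) : SClause Atom Mod :=
  ⟨C.1, permClause σ C.1 C.2⟩

/-- The literals directly contained in a clause. -/
def topLits {Atom Mod : Type} : ∀ k : ℕ, ClauseT Atom Mod k → Set (Lit Atom)
  | 0, C => {l | l ∈ C}
  | _+1, C => {l | Sum.inl l ∈ C}

/-- All literals occurring in a clause, at any modal depth. -/
def litsIn {Atom Mod : Type} : ∀ k : ℕ, ClauseT Atom Mod k → Set (Lit Atom)
  | 0, C => {l | l ∈ C}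
  | k+1, C => {l | Sum.inl l ∈ C} ∪
      {l | ∃ (b : Bool) (m : Mod) (C' : ClauseT Atom Mod k),
            Sum.inr (b, m, C') ∈ C ∧ l ∈ litsIn k C'}

/-- The atom `a` occurs in `φ` (in either polarity, at any modal depth). -/
def atomOccurs {Atom Mod : Type} {n : ℕ} (φ : FormT Atom Mod n) (a : Atom) : Prop :=
  (∃ C ∈ φ, Lit.pos a ∈ litsIn n C) ∨ (∃ C ∈ φ, Lit.neg a ∈ litsIn n C)

/-- `memModal b m C' k C`: the clause `C` contains the modal literal with polarity `b`
(`true` for `□`, `false` for `¬□`), modality `m` and clause `C'`. -/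
def memModal {Atom Mod : Type} (b : Bool) (m : Mod) (C' : SClause Atom Mod) :
    ∀ k : ℕ, ClauseT Atom Mod k → Prop
  | 0, _ => False
  | k+1, C => ∃ D : ClauseT Atom Mod k, Sum.inr (b, m, D) ∈ C ∧ C' = ⟨k, D⟩

abbrev OccStep (Atom Mod : Type) := Bool × Mod × SClause Atom Mod

/-- The address of a clause occurrence in a formula: a top clause together with a
chain of modal-literal choices leading to the occurrence. -/
abbrev OccAddr (Atom Mod : Type) := SClause Atom Mod × List (OccStep Atom Mod)

def chainOK {Atom Mod : Type} : SClause Atom Mod → List (OccStep Atom Mod) → Prop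
  | _, [] => True
  | C, s :: rest => memModal s.1 s.2.1 s.2.2 C.1 C.2 ∧ chainOK s.2.2 rest

/-- The clause sitting at an occurrence address. -/
def occClause {Atom Mod : Type} : SClause Atom Mod → List (OccStep Atom Mod) → SClause Atom Mod
  | C, [] => C
  | _, s :: rest => occClause s.2.2 rest

/-- A valid occurrence of a clause in `φ`. -/
def validOcc {Atom Mod : Type} {n : ℕ} (φ : FormT Atom Mod n) (o : OccAddr Atom Mod) : Prop :=
  (∃ C ∈ φ, o.1 = (⟨n, C⟩ : SClause Atom Mod)) ∧ chainOK o.1 o.2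

/-- Colors: `none` is the color 0 of literal vertices, `some none` the color 1 of top
clauses, and `some (some (m, b))` the color `c(m, b)` of a clause occurring in a modal
literal of modality `m` and polarity `b` (this encoding is injective and avoids 0, 1). -/
abbrev GColor (Mod : Type) := Option (Option (Mod × Bool))

/-- The color of a clause occurrence. -/
def occColor {Atom Mod : Type} (o : OccAddr Atom Mod) : GColor Mod :=
  match o.2.getLast? with
  | none => some none
  | some s => some (some (s.2.1, s.1))

/-- Vertices of `G(φ)`: literal vertices and clause-occurrence vertices. -/
abbrev Vtx (Atom Mod : Type) := Lit Atom ⊕ OccAddr Atom Mod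

/-- The vertex set of `G(φ)`: literal vertices `a`, `¬a` for atoms `a` occurring in
`φ`, and one vertex for each clause occurrence of `φ`. -/
def isVertex {Atom Mod : Type} {n : ℕ} (φ : FormT Atom Mod n) : Vtx Atom Mod → Prop
  | Sum.inl l => atomOccurs φ l.atom
  | Sum.inr o => validOcc φ o

def vColor {Atom Mod : Type} : Vtx Atom Mod → GColor Mod
  | Sum.inl _ => none
  | Sum.inr o => occColor o

/-- The (undirected) edges of `G(φ)`: Boolean-consistency edges `a — ¬a`, edges from a
clause occurrence to the literals it directly contains, and edges from a clause
occurrence to the occurrences of the clauses of its modal literals. -/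
def GEdge {Atom Mod : Type} : Vtx Atom Mod → Vtx Atom Mod → Prop
  | Sum.inl l, Sum.inl l' => l' = l.flip
  | Sum.inr o, Sum.inl l => l ∈ topLits (occClause o.1 o.2).1 (occClause o.1 o.2).2
  | Sum.inl l, Sum.inr o => l ∈ topLits (occClause o.1 o.2).1 (occClause o.1 o.2).2
  | Sum.inr o, Sum.inr o' =>
      (∃ s, o'.1 = o.1 ∧ o'.2 = o.2 ++ [s]) ∨ (∃ s, o.1 = o'.1 ∧ o.2 = o'.2 ++ [s])

/-- A colored automorphism of `G(φ)`: a bijection of the vertex set preserving colors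
and preserving the edge relation in both directions. -/
structure ColoredAut {Atom Mod : Type} {n : ℕ} (φ : FormT Atom Mod n) where
  toEquiv : {v : Vtx Atom Mod // isVertex φ v} ≃ {v : Vtx Atom Mod // isVertex φ v}
  color_eq : ∀ v : {v : Vtx Atom Mod // isVertex φ v}, vColor (toEquiv v).1 = vColor v.1
  edge_iff : ∀ v w : {v : Vtx Atom Mod // isVertex φ v},
    GEdge (toEquiv v).1 (toEquiv w).1 ↔ GEdge v.1 w.1

/-!
A consistent symmetry `σ` acts on the vertices of `G(φ)`: on literals by `σ`, on clause
occurrences by applying `σ` to the top clause and to every clause along the address. This action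
preserves colors and edges, and `σ⁻¹` inverts it.

Conversely, colors force an automorphism `π` to send literal vertices to literal vertices and
occurrences to occurrences, and the edges `a — ¬a` make the induced literal map `σ` consistent.
Roots (color 1) go to roots; by induction on the address length, `π` preserves it, so `π` sends
children to children, with the same modality and polarity by the colors. Induction on the modal
depth then shows that the clause at `π o` contains `σ` of the clause at `o`; the same for
`π⁻¹` gives equality, and at the roots this says that `σ` maps the clauses of `φ` into `φ`.
-/

section Occurrences

variable {Atom Mod : Type}

theorem Lit.atom_flip (l : Lit Atom) : l.flip.atom = l.atom := by cases l <;> rfl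

instance instPartialOrderClauseT : ∀ k, PartialOrder (ClauseT Atom Mod k)
  | 0 => inferInstanceAs (PartialOrder (Finset (Lit Atom)))
  | k + 1 => inferInstanceAs (PartialOrder (Finset (Lit Atom ⊕ Bool × Mod × ClauseT Atom Mod k)))

theorem Consistent.symm {σ : Equiv.Perm (Lit Atom)} (h : Consistent σ) : Consistent σ.symm :=
  fun l => σ.injective (by rw [h, Equiv.apply_symm_apply, Equiv.apply_symm_apply])

theorem occClause_append (C : SClause Atom Mod) (xs : List (OccStep Atom Mod))
    (s : OccStep Atom Mod) : occClause C (xs ++ [s]) = s.2.2 := by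
  induction xs generalizing C with
  | nil => rfl
  | cons x xs ih => exact ih x.2.2

theorem chainOK_append (C : SClause Atom Mod) (xs : List (OccStep Atom Mod))
    (s : OccStep Atom Mod) :
    chainOK C (xs ++ [s]) ↔
      chainOK C xs ∧ memModal s.1 s.2.1 s.2.2 (occClause C xs).1 (occClause C xs).2 := by
  induction xs generalizing C with
  | nil => simp [chainOK, occClause]
  | cons x xs ih =>
    simp only [List.cons_append, chainOK, occClause, ih, and_assoc]

theorem memModal_succ_iff {b : Bool} {m : Mod} {k : ℕ} {E : ClauseT Atom Mod k}
    {C : ClauseT Atom Mod (k + 1)} : memModal b m ⟨k, E⟩ (k + 1) C ↔ Sum.inr (b, m, E) ∈ C :=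
  ⟨fun ⟨_, hD, h⟩ => by cases sigma_mk_injective h; exact hD, fun h => ⟨E, h, rfl⟩⟩

theorem memModal_fst {b : Bool} {m : Mod} {D : SClause Atom Mod} :
    ∀ {k : ℕ} {C : ClauseT Atom Mod k}, memModal b m D k C → D.1 + 1 = k
  | 0, _, h => h.elim
  | _ + 1, _, ⟨_, _, h⟩ => by rw [h]

theorem litsIn_subset_of_memModal {b : Bool} {m : Mod} {D : SClause Atom Mod} :
    ∀ {k : ℕ} {C : ClauseT Atom Mod k}, memModal b m D k C → litsIn D.1 D.2 ⊆ litsIn k C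
  | 0, _, h => h.elim
  | _ + 1, _, ⟨E, hE, h⟩ => by
    subst h
    exact fun l hl => Or.inr ⟨b, m, E, hE, hl⟩

theorem occClause_fst_add_length :
    ∀ {C : SClause Atom Mod} {xs : List (OccStep Atom Mod)}, chainOK C xs →
      (occClause C xs).1 + xs.length = C.1
  | _, [], _ => rfl
  | _, x :: _, ⟨hx, hxs⟩ => by
    have := memModal_fst hx
    have := occClause_fst_add_length hxs
    simp only [occClause, List.length_cons]
    omega

theorem litsIn_occClause_subset :
    ∀ {C : SClause Atom Mod} {xs : List (OccStep Atom Mod)}, chainOK C xs →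
      litsIn (occClause C xs).1 (occClause C xs).2 ⊆ litsIn C.1 C.2
  | _, [], _ => le_rfl
  | _, _ :: _, ⟨hx, hxs⟩ => (litsIn_occClause_subset hxs).trans (litsIn_subset_of_memModal hx)

theorem topLits_subset_litsIn : ∀ {k : ℕ} (C : ClauseT Atom Mod k), topLits k C ⊆ litsIn k C
  | 0, _ => le_rfl
  | _ + 1, _ => fun _ => Or.inl

theorem occColor_append (C : SClause Atom Mod) (xs : List (OccStep Atom Mod))
    (s : OccStep Atom Mod) : occColor (C, xs ++ [s]) = some (some (s.2.1, s.1)) := by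
  simp [occColor]

theorem occColor_eq_some_none_iff (o : OccAddr Atom Mod) : occColor o = some none ↔ o.2 = [] := by
  obtain ⟨C, xs⟩ := o
  rcases List.eq_nil_or_concat' xs with rfl | ⟨ys, s, rfl⟩
  · simp [occColor]
  · simp [occColor_append]

theorem occColor_ne_none (o : OccAddr Atom Mod) : occColor o ≠ none := by
  unfold occColor
  split <;> simp

variable {n : ℕ} {φ : FormT Atom Mod n}

theorem validOcc_append_iff {o : OccAddr Atom Mod} {s : OccStep Atom Mod} :
    validOcc φ (o.1, o.2 ++ [s]) ↔
      validOcc φ o ∧ memModal s.1 s.2.1 s.2.2 (occClause o.1 o.2).1 (occClause o.1 o.2).2 := by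
  simp only [validOcc, chainOK_append, and_assoc]

theorem occClause_fst_add_length_of_validOcc {o : OccAddr Atom Mod} (ho : validOcc φ o) :
    (occClause o.1 o.2).1 + o.2.length = n := by
  obtain ⟨⟨C, -, hC⟩, hchain⟩ := ho
  rw [occClause_fst_add_length hchain, hC]

theorem atomOccurs_iff (l : Lit Atom) :
    atomOccurs φ l.atom ↔ (∃ C ∈ φ, l ∈ litsIn n C) ∨ (∃ C ∈ φ, l.flip ∈ litsIn n C) := by
  cases l with
  | pos a => rfl
  | neg a => exact Or.comm

theorem atomOccurs_of_mem_topLits {o : OccAddr Atom Mod} (ho : validOcc φ o) {l : Lit Atom}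
    (hl : l ∈ topLits (occClause o.1 o.2).1 (occClause o.1 o.2).2) : atomOccurs φ l.atom := by
  obtain ⟨⟨C, hC, hCo⟩, hchain⟩ := ho
  have hlC : l ∈ litsIn n C := by
    have := litsIn_occClause_subset hchain (topLits_subset_litsIn _ hl)
    rwa [hCo] at this
  exact (atomOccurs_iff l).2 (.inl ⟨C, hC, hlC⟩)

end Occurrences

namespace ColoredAut

variable {Atom Mod : Type} {n : ℕ} {φ : FormT Atom Mod n} (π : ColoredAut φ)

def symm : ColoredAut φ where
  toEquiv := π.toEquiv.symm
  color_eq v := by simpa using (π.color_eq (π.toEquiv.symm v)).symm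
  edge_iff v w := by simpa using (π.edge_iff (π.toEquiv.symm v) (π.toEquiv.symm w)).symm

@[simp] theorem symm_toEquiv : π.symm.toEquiv = π.toEquiv.symm := rfl

open Classical in
noncomputable def litPerm (l : Lit Atom) : Lit Atom :=
  if h : atomOccurs φ l.atom then ((π.toEquiv ⟨.inl l, h⟩).1.getLeft?).getD l else l

open Classical in
noncomputable def occMap (o : OccAddr Atom Mod) : OccAddr Atom Mod :=
  if h : validOcc φ o then ((π.toEquiv ⟨.inr o, h⟩).1.getRight?).getD o else o

theorem toEquiv_inl {l : Lit Atom} (h : isVertex φ (.inl l)) :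
    (π.toEquiv ⟨.inl l, h⟩).1 = .inl (π.litPerm l) := by
  have hcolor := π.color_eq ⟨.inl l, h⟩
  rcases hv : (π.toEquiv ⟨.inl l, h⟩).1 with l' | o'
  · simp [litPerm, dif_pos (show atomOccurs φ l.atom from h), hv]
  · rw [hv] at hcolor
    exact absurd hcolor (occColor_ne_none o')

theorem toEquiv_inr {o : OccAddr Atom Mod} (h : isVertex φ (.inr o)) :
    (π.toEquiv ⟨.inr o, h⟩).1 = .inr (π.occMap o) := by
  have hcolor := π.color_eq ⟨.inr o, h⟩
  rcases hv : (π.toEquiv ⟨.inr o, h⟩).1 with l' | o'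
  · rw [hv] at hcolor
    exact absurd hcolor.symm (occColor_ne_none o)
  · simp [occMap, dif_pos (show validOcc φ o from h), hv]

theorem litPerm_of_not_atomOccurs {l : Lit Atom} (h : ¬ atomOccurs φ l.atom) :
    π.litPerm l = l := by
  simp [litPerm, h]

theorem atomOccurs_litPerm {l : Lit Atom} (h : atomOccurs φ l.atom) :
    atomOccurs φ (π.litPerm l).atom := by
  have := (π.toEquiv ⟨.inl l, h⟩).2
  rwa [π.toEquiv_inl h] at this

theorem validOcc_occMap {o : OccAddr Atom Mod} (h : validOcc φ o) : validOcc φ (π.occMap o) := by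
  have := (π.toEquiv ⟨.inr o, h⟩).2
  rwa [π.toEquiv_inr h] at this

theorem occColor_occMap {o : OccAddr Atom Mod} (h : validOcc φ o) :
    occColor (π.occMap o) = occColor o := by
  have := π.color_eq ⟨.inr o, h⟩
  rwa [π.toEquiv_inr h] at this

theorem symm_litPerm_litPerm (l : Lit Atom) : π.symm.litPerm (π.litPerm l) = l := by
  by_cases h : atomOccurs φ l.atom
  · have himage : (⟨.inl (π.litPerm l), π.atomOccurs_litPerm h⟩ : {v // isVertex φ v}) =
        π.toEquiv ⟨.inl l, h⟩ := Subtype.ext (π.toEquiv_inl h).symm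
    have := π.symm.toEquiv_inl (π.atomOccurs_litPerm h)
    rw [symm_toEquiv, himage, Equiv.symm_apply_apply] at this
    exact (Sum.inl_injective this).symm
  · rw [π.litPerm_of_not_atomOccurs h, π.symm.litPerm_of_not_atomOccurs h]

theorem symm_occMap_occMap {o : OccAddr Atom Mod} (h : validOcc φ o) :
    π.symm.occMap (π.occMap o) = o := by
  have himage : (⟨.inr (π.occMap o), π.validOcc_occMap h⟩ : {v // isVertex φ v}) =
      π.toEquiv ⟨.inr o, h⟩ := Subtype.ext (π.toEquiv_inr h).symm
  have := π.symm.toEquiv_inr (π.validOcc_occMap h)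
  rw [symm_toEquiv, himage, Equiv.symm_apply_apply] at this
  exact (Sum.inr_injective this).symm

theorem litPerm_comp_symm : π.litPerm ∘ π.symm.litPerm = id :=
  funext π.symm.symm_litPerm_litPerm

theorem litPerm_bijective : Function.Bijective π.litPerm :=
  Function.bijective_iff_has_inverse.2
    ⟨π.symm.litPerm, π.symm_litPerm_litPerm, π.symm.symm_litPerm_litPerm⟩

theorem litPerm_consistent : Consistent π.litPerm := by
  intro l
  by_cases h : atomOccurs φ l.atom
  · have hflip : atomOccurs φ l.flip.atom := by rwa [Lit.atom_flip]
    have := (π.edge_iff ⟨.inl l, h⟩ ⟨.inl l.flip, hflip⟩).2 rfl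
    rwa [π.toEquiv_inl h, π.toEquiv_inl hflip] at this
  · have hflip : ¬ atomOccurs φ l.flip.atom := by rwa [Lit.atom_flip]
    rw [π.litPerm_of_not_atomOccurs h, π.litPerm_of_not_atomOccurs hflip]

theorem mem_topLits_occMap {o : OccAddr Atom Mod} (ho : validOcc φ o) {l : Lit Atom}
    (hl : l ∈ topLits (occClause o.1 o.2).1 (occClause o.1 o.2).2) :
    π.litPerm l ∈ topLits (occClause (π.occMap o).1 (π.occMap o).2).1
      (occClause (π.occMap o).1 (π.occMap o).2).2 := by
  have hocc := atomOccurs_of_mem_topLits ho hl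
  have := (π.edge_iff ⟨.inl l, hocc⟩ ⟨.inr o, ho⟩).2 hl
  rwa [π.toEquiv_inl hocc, π.toEquiv_inr ho] at this

theorem gEdge_occMap {o o' : OccAddr Atom Mod} (ho : validOcc φ o) (ho' : validOcc φ o')
    (h : GEdge (.inr o) (.inr o')) : GEdge (.inr (π.occMap o)) (.inr (π.occMap o')) := by
  have := (π.edge_iff ⟨.inr o, ho⟩ ⟨.inr o', ho'⟩).2 h
  rwa [π.toEquiv_inr ho, π.toEquiv_inr ho'] at this

theorem length_occMap {o : OccAddr Atom Mod} (ho : validOcc φ o) :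
    (π.occMap o).2.length = o.2.length := by
  induction hj : o.2.length using Nat.strong_induction_on generalizing π o with
  | _ j ih =>
    obtain ⟨C, xs⟩ := o
    rcases List.eq_nil_or_concat' xs with rfl | ⟨ys, s, rfl⟩
    · subst hj
      have := π.occColor_occMap ho
      rw [(occColor_eq_some_none_iff (C, [])).2 rfl, occColor_eq_some_none_iff] at this
      simp [this]
    · have hparent : validOcc φ (C, ys) := (validOcc_append_iff.1 ho).1
      have hj' : ys.length + 1 = j := by simpa using hj
      have hlen := ih ys.length (by omega) π hparent rfl
      rcases π.gEdge_occMap hparent ho (Or.inl ⟨s, rfl, rfl⟩) with ⟨t, -, ht⟩ | ⟨t, -, ht⟩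
      · simp [ht, hlen, hj']
      · -- Then `π o` is shorter than `o`, and the induction hypothesis for `π.symm` at `π o`
        -- contradicts `π.symm (π o) = o`.
        have hup := congrArg List.length ht
        simp only [List.length_append, List.length_singleton, hlen] at hup
        have := ih _ (by omega) π.symm (π.validOcc_occMap ho) rfl
        rw [π.symm_occMap_occMap ho] at this
        simp only [List.length_append, List.length_singleton] at this
        omega

theorem exists_occClause_occMap {o : OccAddr Atom Mod} (ho : validOcc φ o) {k : ℕ}
    {C : ClauseT Atom Mod k} (hC : occClause o.1 o.2 = ⟨k, C⟩) :
    ∃ C' : ClauseT Atom Mod k, occClause (π.occMap o).1 (π.occMap o).2 = ⟨k, C'⟩ := by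
  have hk : (occClause (π.occMap o).1 (π.occMap o).2).1 = k := by
    have h₁ := occClause_fst_add_length_of_validOcc (π.validOcc_occMap ho)
    have h₂ := occClause_fst_add_length_of_validOcc ho
    rw [π.length_occMap ho] at h₁
    rw [hC] at h₂
    dsimp only at h₂
    omega
  generalize occClause (π.occMap o).1 (π.occMap o).2 = D at hk ⊢
  obtain ⟨k', C'⟩ := D
  subst hk
  exact ⟨C', rfl⟩

theorem occMap_append {o : OccAddr Atom Mod} {s : OccStep Atom Mod}
    (h : validOcc φ (o.1, o.2 ++ [s])) :
    ∃ t : OccStep Atom Mod, π.occMap (o.1, o.2 ++ [s]) =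
      ((π.occMap o).1, (π.occMap o).2 ++ [t]) ∧ t.1 = s.1 ∧ t.2.1 = s.2.1 := by
  have ho : validOcc φ o := (validOcc_append_iff.1 h).1
  have hlen := π.length_occMap h
  have hlen' := π.length_occMap ho
  rcases π.gEdge_occMap ho h (Or.inl ⟨s, rfl, rfl⟩) with ⟨t, h1, h2⟩ | ⟨t, -, h2⟩
  · have hchild : π.occMap (o.1, o.2 ++ [s]) = ((π.occMap o).1, (π.occMap o).2 ++ [t]) :=
      Prod.ext h1 h2
    have hcolor := π.occColor_occMap h
    rw [hchild, occColor_append, occColor_append] at hcolor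
    simp only [Option.some.injEq, Prod.mk.injEq] at hcolor
    exact ⟨t, hchild, hcolor.2, hcolor.1⟩
  · have := congrArg List.length h2
    simp only [List.length_append, List.length_singleton] at this hlen
    omega

end ColoredAut

section Permutations

variable {Atom Mod : Type} [DecidableEq Atom] [DecidableEq Mod]

theorem permClause_comp (σ τ : Lit Atom → Lit Atom) :
    ∀ (k : ℕ) (C : ClauseT Atom Mod k),
      permClause τ k (permClause σ k C) = permClause (τ ∘ σ) k C
  | 0, C => by simp [permClause, Finset.image_image]
  | k + 1, C => by
    simp only [permClause, Finset.image_image]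
    refine Finset.image_congr ?_
    rintro (l | ⟨b, m, C'⟩) _
    · rfl
    · simp [permClause_comp σ τ k C']

theorem permClause_id : ∀ (k : ℕ) (C : ClauseT Atom Mod k), permClause id k C = C
  | 0, C => Finset.image_id
  | k + 1, C => by
    conv_rhs => rw [← Finset.image_id (s := C)]
    refine Finset.image_congr ?_
    rintro (l | ⟨b, m, C'⟩) _
    · rfl
    · simp [permClause_id k C']

theorem permClause_mono (σ : Lit Atom → Lit Atom) :
    ∀ (k : ℕ) {C D : ClauseT Atom Mod k}, C ≤ D → permClause σ k C ≤ permClause σ k D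
  | 0, _, _, h => Finset.image_subset_image h
  | _ + 1, _, _, h => Finset.image_subset_image h

theorem permForm_comp (σ τ : Lit Atom → Lit Atom) {n : ℕ} (φ : FormT Atom Mod n) :
    permForm τ (permForm σ φ) = permForm (τ ∘ σ) φ := by
  simp only [permForm, Finset.image_image]
  exact Finset.image_congr fun C _ => permClause_comp σ τ n C

theorem permForm_id {n : ℕ} (φ : FormT Atom Mod n) : permForm id φ = φ := by
  conv_rhs => rw [← Finset.image_id (s := φ)]
  exact Finset.image_congr fun C _ => permClause_id n C

theorem permForm_mono (σ : Lit Atom → Lit Atom) {n : ℕ} {φ ψ : FormT Atom Mod n} (h : φ ⊆ ψ) :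
    permForm σ φ ⊆ permForm σ ψ :=
  Finset.image_subset_image h

theorem permForm_symm {σ : Equiv.Perm (Lit Atom)} {n : ℕ} {φ : FormT Atom Mod n}
    (h : permForm σ φ = φ) : permForm σ.symm φ = φ := by
  conv_lhs => rw [← h]
  rw [permForm_comp, Equiv.symm_comp_self, permForm_id]

theorem mem_permClause_of_mem_topLits (σ : Lit Atom → Lit Atom) :
    ∀ {k : ℕ} {C : ClauseT Atom Mod k} {l : Lit Atom}, l ∈ topLits k C →
      σ l ∈ topLits k (permClause σ k C)
  | 0, _, _, h => Finset.mem_image_of_mem σ h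
  | _ + 1, _, l, h => Finset.mem_image.2 ⟨.inl l, h, rfl⟩

theorem mem_litsIn_permClause (σ : Lit Atom → Lit Atom) :
    ∀ {k : ℕ} {C : ClauseT Atom Mod k} {l : Lit Atom}, l ∈ litsIn k C →
      σ l ∈ litsIn k (permClause σ k C)
  | 0, _, _, h => Finset.mem_image_of_mem σ h
  | _ + 1, _, l, .inl h => .inl (Finset.mem_image.2 ⟨.inl l, h, rfl⟩)
  | _ + 1, _, _, .inr ⟨b, m, C', hC', hl⟩ =>
    .inr ⟨b, m, _, Finset.mem_image.2 ⟨.inr (b, m, C'), hC', rfl⟩, mem_litsIn_permClause σ hl⟩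

theorem memModal_permClause (σ : Lit Atom → Lit Atom) {b : Bool} {m : Mod}
    {D : SClause Atom Mod} : ∀ {k : ℕ} {C : ClauseT Atom Mod k},
      memModal b m D k C → memModal b m (permSClause σ D) k (permClause σ k C)
  | 0, _, h => h.elim
  | k + 1, _, ⟨E, hE, h⟩ => by
    subst h
    exact ⟨permClause σ k E, Finset.mem_image.2 ⟨.inr (b, m, E), hE, rfl⟩, rfl⟩

theorem atomOccurs_perm {σ : Lit Atom → Lit Atom} (hcons : Consistent σ) {n : ℕ}
    {φ : FormT Atom Mod n} (hsym : permForm σ φ = φ) {l : Lit Atom}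
    (h : atomOccurs φ l.atom) : atomOccurs φ (σ l).atom := by
  have hmem : ∀ C ∈ φ, permClause σ n C ∈ φ := fun C hC => by
    rw [← hsym]; exact Finset.mem_image_of_mem _ hC
  rw [atomOccurs_iff] at h ⊢
  rcases h with ⟨C, hC, hl⟩ | ⟨C, hC, hl⟩
  · exact .inl ⟨_, hmem C hC, mem_litsIn_permClause σ hl⟩
  · exact .inr ⟨_, hmem C hC, hcons l ▸ mem_litsIn_permClause σ hl⟩

end Permutations

section VertexAction

variable {Atom Mod : Type} [DecidableEq Atom] [DecidableEq Mod]

theorem permSClause_comp (σ τ : Lit Atom → Lit Atom) (C : SClause Atom Mod) :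
    permSClause τ (permSClause σ C) = permSClause (τ ∘ σ) C :=
  congrArg (Sigma.mk C.1) (permClause_comp σ τ C.1 C.2)

theorem permSClause_id (C : SClause Atom Mod) : permSClause id C = C :=
  congrArg (Sigma.mk C.1) (permClause_id C.1 C.2)

def mapOcc (σ : Lit Atom → Lit Atom) (o : OccAddr Atom Mod) : OccAddr Atom Mod :=
  (permSClause σ o.1, o.2.map fun s => (s.1, s.2.1, permSClause σ s.2.2))

theorem mapOcc_comp (σ τ : Lit Atom → Lit Atom) (o : OccAddr Atom Mod) :
    mapOcc τ (mapOcc σ o) = mapOcc (τ ∘ σ) o := by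
  simp [mapOcc, permSClause_comp, Function.comp_def]

theorem mapOcc_id (o : OccAddr Atom Mod) : mapOcc id o = o := by
  simp [mapOcc, permSClause_id]

theorem occClause_mapOcc (σ : Lit Atom → Lit Atom) (o : OccAddr Atom Mod) :
    occClause (mapOcc σ o).1 (mapOcc σ o).2 = permSClause σ (occClause o.1 o.2) := by
  obtain ⟨C, xs⟩ := o
  induction xs generalizing C with
  | nil => rfl
  | cons x xs ih => exact ih x.2.2

theorem occColor_mapOcc (σ : Lit Atom → Lit Atom) (o : OccAddr Atom Mod) :
    occColor (mapOcc σ o) = occColor o := by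
  unfold occColor mapOcc
  rw [List.getLast?_map]
  cases o.2.getLast? <;> rfl

theorem validOcc_mapOcc {σ : Lit Atom → Lit Atom} {n : ℕ} {φ : FormT Atom Mod n}
    (hsym : permForm σ φ = φ) {o : OccAddr Atom Mod} (ho : validOcc φ o) :
    validOcc φ (mapOcc σ o) := by
  obtain ⟨⟨C, hC, hCo⟩, hchain⟩ := ho
  refine ⟨⟨permClause σ n C, hsym ▸ Finset.mem_image_of_mem _ hC, by
    rw [show (mapOcc σ o).1 = permSClause σ o.1 from rfl, hCo]; rfl⟩, ?_⟩
  obtain ⟨C₀, xs⟩ := o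
  clear hCo
  induction xs generalizing C₀ with
  | nil => trivial
  | cons x xs ih => exact ⟨memModal_permClause σ hchain.1, ih x.2.2 hchain.2⟩

def vmap (σ : Lit Atom → Lit Atom) : Vtx Atom Mod → Vtx Atom Mod
  | .inl l => .inl (σ l)
  | .inr o => .inr (mapOcc σ o)

theorem vmap_comp (σ τ : Lit Atom → Lit Atom) (v : Vtx Atom Mod) :
    vmap τ (vmap σ v) = vmap (τ ∘ σ) v := by
  cases v <;> simp [vmap, mapOcc_comp]

theorem vmap_id (v : Vtx Atom Mod) : vmap id v = v := by
  cases v <;> simp [vmap, mapOcc_id]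

theorem isVertex_vmap {σ : Lit Atom → Lit Atom} (hcons : Consistent σ) {n : ℕ}
    {φ : FormT Atom Mod n} (hsym : permForm σ φ = φ) {v : Vtx Atom Mod} (h : isVertex φ v) :
    isVertex φ (vmap σ v) := by
  cases v with
  | inl l => exact atomOccurs_perm hcons hsym h
  | inr o => exact validOcc_mapOcc hsym h

theorem vColor_vmap (σ : Lit Atom → Lit Atom) (v : Vtx Atom Mod) :
    vColor (vmap σ v) = vColor v := by
  cases v with
  | inl l => rfl
  | inr o => exact occColor_mapOcc σ o

theorem gEdge_vmap {σ : Lit Atom → Lit Atom} (hcons : Consistent σ) {v w : Vtx Atom Mod}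
    (h : GEdge v w) : GEdge (vmap σ v) (vmap σ w) := by
  have htop {o : OccAddr Atom Mod} {l : Lit Atom}
      (hl : l ∈ topLits (occClause o.1 o.2).1 (occClause o.1 o.2).2) :
      σ l ∈ topLits (occClause (mapOcc σ o).1 (mapOcc σ o).2).1
        (occClause (mapOcc σ o).1 (mapOcc σ o).2).2 := by
    rw [occClause_mapOcc]
    exact mem_permClause_of_mem_topLits σ hl
  rcases v with l | o <;> rcases w with l' | o'
  · show σ l' = (σ l).flip
    rw [show l' = l.flip from h, hcons]
  · exact htop h
  · exact htop h
  · rcases h with ⟨s, h1, h2⟩ | ⟨s, h1, h2⟩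
    · exact .inl ⟨(s.1, s.2.1, permSClause σ s.2.2), congrArg (permSClause σ) h1,
        by simp [mapOcc, h2]⟩
    · exact .inr ⟨(s.1, s.2.1, permSClause σ s.2.2), congrArg (permSClause σ) h1,
        by simp [mapOcc, h2]⟩

def vmapEquiv (σ : Equiv.Perm (Lit Atom)) : Equiv.Perm (Vtx Atom Mod) where
  toFun := vmap σ
  invFun := vmap σ.symm
  left_inv v := by rw [vmap_comp, Equiv.symm_comp_self, vmap_id]
  right_inv v := by rw [vmap_comp, Equiv.self_comp_symm, vmap_id]

theorem gEdge_vmap_iff {σ : Equiv.Perm (Lit Atom)} (hcons : Consistent σ) {v w : Vtx Atom Mod} :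
    GEdge (vmap σ v) (vmap σ w) ↔ GEdge v w :=
  ⟨fun h => by
    have := gEdge_vmap hcons.symm h
    rwa [vmap_comp, vmap_comp, Equiv.symm_comp_self, vmap_id, vmap_id] at this,
    gEdge_vmap hcons⟩

def ColoredAut.ofPerm {n : ℕ} {φ : FormT Atom Mod n} (σ : Equiv.Perm (Lit Atom))
    (hcons : Consistent σ) (hsym : permForm σ φ = φ) : ColoredAut φ where
  toEquiv := (vmapEquiv σ).subtypeEquiv fun _ =>
    ⟨isVertex_vmap hcons hsym, fun h => by
      have : isVertex φ ((vmapEquiv σ).symm (vmapEquiv σ _)) :=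
        isVertex_vmap hcons.symm (permForm_symm hsym) h
      rwa [Equiv.symm_apply_apply] at this⟩
  color_eq v := vColor_vmap σ v.1
  edge_iff _ _ := gEdge_vmap_iff hcons

end VertexAction

namespace ColoredAut

variable {Atom Mod : Type} [DecidableEq Atom] [DecidableEq Mod] {n : ℕ} {φ : FormT Atom Mod n}
  (π : ColoredAut φ)

theorem occClause_occMap_of_le {k : ℕ}
    (hle : ∀ (π : ColoredAut φ) (o : OccAddr Atom Mod), validOcc φ o →
      ∀ C C' : ClauseT Atom Mod k, occClause o.1 o.2 = ⟨k, C⟩ →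
        occClause (π.occMap o).1 (π.occMap o).2 = ⟨k, C'⟩ → permClause π.litPerm k C ≤ C')
    {o : OccAddr Atom Mod} (ho : validOcc φ o) {C : ClauseT Atom Mod k}
    (hC : occClause o.1 o.2 = ⟨k, C⟩) :
    occClause (π.occMap o).1 (π.occMap o).2 = ⟨k, permClause π.litPerm k C⟩ := by
  obtain ⟨C', hC'⟩ := π.exists_occClause_occMap ho hC
  -- the inclusion for `π.symm` at `π.occMap o` gives the reverse inclusion
  have hback : permClause π.symm.litPerm k C' ≤ C :=
    hle π.symm _ (π.validOcc_occMap ho) C' C hC' (by rw [π.symm_occMap_occMap ho, hC])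
  have hC'_le : C' ≤ permClause π.litPerm k C := by
    calc C' = permClause π.litPerm k (permClause π.symm.litPerm k C') := by
          rw [permClause_comp, litPerm_comp_symm, permClause_id]
      _ ≤ permClause π.litPerm k C := permClause_mono _ k hback
  rw [hC', le_antisymm hC'_le (hle π o ho C C' hC hC')]

theorem permClause_zero_le {o : OccAddr Atom Mod} (ho : validOcc φ o) {C C' : ClauseT Atom Mod 0}
    (hC : occClause o.1 o.2 = ⟨0, C⟩) (hC' : occClause (π.occMap o).1 (π.occMap o).2 = ⟨0, C'⟩) :
    permClause π.litPerm 0 C ≤ C' := by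
  intro x hx
  obtain ⟨l, hl, rfl⟩ := Finset.mem_image.1 hx
  have := π.mem_topLits_occMap ho (l := l) (by rw [hC]; exact hl)
  rwa [hC'] at this

theorem permClause_succ_le {k : ℕ}
    (ih : ∀ (π : ColoredAut φ) (o : OccAddr Atom Mod), validOcc φ o →
      ∀ C : ClauseT Atom Mod k, occClause o.1 o.2 = ⟨k, C⟩ →
        occClause (π.occMap o).1 (π.occMap o).2 = ⟨k, permClause π.litPerm k C⟩)
    {o : OccAddr Atom Mod} (ho : validOcc φ o) {C C' : ClauseT Atom Mod (k + 1)}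
    (hC : occClause o.1 o.2 = ⟨k + 1, C⟩)
    (hC' : occClause (π.occMap o).1 (π.occMap o).2 = ⟨k + 1, C'⟩) :
    permClause π.litPerm (k + 1) C ≤ C' := by
  intro x hx
  obtain ⟨e, he, rfl⟩ := Finset.mem_image.1 hx
  rcases e with l | ⟨b, m, D⟩
  · have := π.mem_topLits_occMap ho (l := l) (by rw [hC]; exact he)
    rwa [hC'] at this
  · have hchild : validOcc φ (o.1, o.2 ++ [(b, m, ⟨k, D⟩)]) :=
      validOcc_append_iff.2 ⟨ho, by rw [hC]; exact memModal_succ_iff.2 he⟩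
    obtain ⟨t, ht, hb, hm⟩ := π.occMap_append hchild
    have hmem := (validOcc_append_iff.1 (ht ▸ π.validOcc_occMap hchild)).2
    have hD := ih π _ hchild D (occClause_append _ _ _)
    rw [ht, occClause_append] at hD
    rw [hC', hb, hm, hD] at hmem
    exact memModal_succ_iff.1 hmem

theorem occClause_occMap (k : ℕ) {o : OccAddr Atom Mod} (ho : validOcc φ o)
    {C : ClauseT Atom Mod k} (hC : occClause o.1 o.2 = ⟨k, C⟩) :
    occClause (π.occMap o).1 (π.occMap o).2 = ⟨k, permClause π.litPerm k C⟩ := by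
  induction k generalizing π o with
  | zero =>
    exact π.occClause_occMap_of_le (fun π _ ho _ _ hC hC' => π.permClause_zero_le ho hC hC') ho hC
  | succ k ih =>
    exact π.occClause_occMap_of_le
      (fun π _ ho _ _ hC hC' => π.permClause_succ_le (fun π _ ho _ hC => ih π ho hC) ho hC hC')
      ho hC

theorem permForm_litPerm_subset : permForm π.litPerm φ ⊆ φ := by
  intro x hx
  obtain ⟨C, hC, rfl⟩ := Finset.mem_image.1 hx
  have ho : validOcc φ (⟨n, C⟩, []) := ⟨⟨C, hC, rfl⟩, trivial⟩
  have hclause := π.occClause_occMap n ho rfl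
  have hroot := π.length_occMap ho
  obtain ⟨⟨C', hC', hroot'⟩, -⟩ := π.validOcc_occMap ho
  generalize π.occMap (⟨n, C⟩, []) = o' at *
  obtain ⟨D, xs⟩ := o'
  obtain rfl : xs = [] := List.eq_nil_of_length_eq_zero hroot
  obtain rfl : D = ⟨n, C'⟩ := hroot'
  rwa [← sigma_mk_injective hclause]

theorem permForm_litPerm : permForm π.litPerm φ = φ := by
  refine Finset.Subset.antisymm π.permForm_litPerm_subset ?_
  calc φ = permForm π.litPerm (permForm π.symm.litPerm φ) := by
        rw [permForm_comp, litPerm_comp_symm, permForm_id]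
    _ ⊆ permForm π.litPerm φ := permForm_mono _ π.symm.permForm_litPerm_subset

end ColoredAut

theorem graph_detects_symmetries_general {Atom Mod : Type}
    [DecidableEq Atom] [DecidableEq Mod] {n : ℕ} (φ : FormT Atom Mod n) :
    (∀ σ : Lit Atom → Lit Atom,
      Function.Bijective σ → Consistent σ → permForm σ φ = φ →
      ∃ π : ColoredAut φ,
        (∀ (l : Lit Atom) (h : isVertex φ (Sum.inl l)),
            (π.toEquiv ⟨Sum.inl l, h⟩).1 = Sum.inl (σ l)) ∧
        (∀ (o : OccAddr Atom Mod) (h : isVertex φ (Sum.inr o)),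
            ∃ (o' : OccAddr Atom Mod) (h' : validOcc φ o'),
              π.toEquiv ⟨Sum.inr o, h⟩ = ⟨Sum.inr o', h'⟩ ∧
              occClause o'.1 o'.2 = permSClause σ (occClause o.1 o.2) ∧
              occColor o' = occColor o)) ∧
    (∀ π : ColoredAut φ,
      ∃ σ : Lit Atom → Lit Atom,
        Function.Bijective σ ∧ Consistent σ ∧
        (∀ l : Lit Atom, ¬ atomOccurs φ l.atom → σ l = l) ∧
        (∀ (l : Lit Atom) (h : isVertex φ (Sum.inl l)),
            (π.toEquiv ⟨Sum.inl l, h⟩).1 = Sum.inl (σ l)) ∧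
        permForm σ φ = φ) := by
  refine ⟨fun σ hbij hcons hsym => ?_, fun π => ?_⟩
  · exact ⟨ColoredAut.ofPerm (Equiv.ofBijective σ hbij) hcons hsym, fun _ _ => rfl,
      fun o h => ⟨mapOcc σ o, validOcc_mapOcc hsym h, rfl, occClause_mapOcc σ o,
        occColor_mapOcc σ o⟩⟩
  · exact ⟨π.litPerm, π.litPerm_bijective, π.litPerm_consistent,
      fun _ => π.litPerm_of_not_atomOccurs, fun _ => π.toEquiv_inl, π.permForm_litPerm⟩

/-- correctness of the colored-graph construction.
(a) every consistent symmetry `σ` of `φ` induces a colored automorphism of `G(φ)`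
sending the literal vertex `l` to `σ l` and each occurrence of a clause `C` to an
occurrence of `σ(C)` of the same color; (b) conversely, the restriction to literal
vertices of a colored automorphism of `G(φ)`, extended by the identity elsewhere, is a
consistent permutation which is a symmetry of `φ`. -/
theorem graph_detects_symmetries {Atom Mod : Type} [Countable Atom] [Countable Mod]
    [DecidableEq Atom] [DecidableEq Mod] {n : ℕ} (φ : FormT Atom Mod n) :
    (∀ σ : Lit Atom → Lit Atom,
      Function.Bijective σ → Consistent σ → permForm σ φ = φ →
      ∃ π : ColoredAut φ,
        (∀ (l : Lit Atom) (h : isVertex φ (Sum.inl l)),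
            (π.toEquiv ⟨Sum.inl l, h⟩).1 = Sum.inl (σ l)) ∧
        (∀ (o : OccAddr Atom Mod) (h : isVertex φ (Sum.inr o)),
            ∃ (o' : OccAddr Atom Mod) (h' : validOcc φ o'),
              π.toEquiv ⟨Sum.inr o, h⟩ = ⟨Sum.inr o', h'⟩ ∧
              occClause o'.1 o'.2 = permSClause σ (occClause o.1 o.2) ∧
              occColor o' = occColor o)) ∧
    (∀ π : ColoredAut φ,
      ∃ σ : Lit Atom → Lit Atom,
        Function.Bijective σ ∧ Consistent σ ∧
        (∀ l : Lit Atom, ¬ atomOccurs φ l.atom → σ l = l) ∧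
        (∀ (l : Lit Atom) (h : isVertex φ (Sum.inl l)),
            (π.toEquiv ⟨Sum.inl l, h⟩).1 = Sum.inl (σ l)) ∧
        permForm σ φ = φ) :=
  graph_detects_symmetries_general φ

end ModalSym
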